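/- arXiv:2105.01812 — 12 statements merged into one kernel-verified Lean document; each statement's English description precedes it below -/
import Mathlib

section
/- If (A, μ, α, β) is a BiHom-associative algebra (i.e., αβ = βα, α and β are multiplicative with respect to μ, and μ(α(x), μ(y,z)) = μ(μ(x,y), β(z)) for all x,y,z), and α', β' : A → A are algebra endomorphisms commuting with α, β and each other, then A equipped with the product μ'(x,y) = μ(α'(x), β'(y)), and twisting maps α'∘α and β'∘β, is again a BiHom-associative algebra. -/
def IsBiHomAssociative (K : Type*) [Field K] {A : Type*} [AddCommGroup A] [Module K A]
    (mu : A → A → A) (al be : A → A) : Prop :=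
  IsLinearMap K al ∧ IsLinearMap K be ∧
  (∀ x, IsLinearMap K (mu x)) ∧ (∀ y, IsLinearMap K (fun x => mu x y)) ∧
  (∀ x, al (be x) = be (al x)) ∧
  (∀ x y, al (mu x y) = mu (al x) (al y)) ∧
  (∀ x y, be (mu x y) = mu (be x) (be y)) ∧
  (∀ x y z, mu (al x) (mu y z) = mu (mu x y) (be z))

theorem stmt0 {K : Type*} [Field K] {A : Type*} [AddCommGroup A] [Module K A]
    (mu : A → A → A) (al be al' be' : A → A)
    (h : IsBiHomAssociative K mu al be)
    (hal' : IsLinearMap K al') (hbe' : IsLinearMap K be')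
    (hal'mul : ∀ x y, al' (mu x y) = mu (al' x) (al' y))
    (hbe'mul : ∀ x y, be' (mu x y) = mu (be' x) (be' y))
    (c1 : ∀ x, al' (al x) = al (al' x)) (c2 : ∀ x, al' (be x) = be (al' x))
    (c3 : ∀ x, be' (al x) = al (be' x)) (c4 : ∀ x, be' (be x) = be (be' x))
    (c5 : ∀ x, al' (be' x) = be' (al' x)) :
    IsBiHomAssociative K (fun x y => mu (al' x) (be' y)) (al' ∘ al) (be' ∘ be) := by
  obtain ⟨hal, hbe, hl, hr, hc, halm, hbem, hass⟩ := h
  refine ⟨?_, ?_, ?_, ?_, ?_, ?_, ?_, ?_⟩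
  · exact ⟨fun a b => by simp [Function.comp, hal.map_add, hal'.map_add],
      fun c a => by simp [Function.comp, hal.map_smul, hal'.map_smul]⟩
  · exact ⟨fun a b => by simp [Function.comp, hbe.map_add, hbe'.map_add],
      fun c a => by simp [Function.comp, hbe.map_smul, hbe'.map_smul]⟩
  · intro x
    exact ⟨fun a b => by simp [hbe'.map_add, (hl _).map_add],
      fun c a => by simp [hbe'.map_smul, (hl _).map_smul]⟩
  · intro y
    exact ⟨fun a b => by simp [hal'.map_add, (hr _).map_add],
      fun c a => by simp [hal'.map_smul, (hr _).map_smul]⟩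
  · intro x
    simp only [Function.comp]
    simp only [c1, c2, c3, c4, c5, hc]
  · intro x y
    simp only [Function.comp]
    rw [halm, hal'mul]
    simp only [c1, c2, c3, c4, c5]
  · intro x y
    simp only [Function.comp]
    rw [hbem, hbe'mul]
    simp only [c1, c2, c3, c4, c5]
  · intro x y z
    simp only [Function.comp]
    rw [hbe'mul, hal'mul]
    simp only [c1, c2, c3, c4, c5]
    rw [hass]
end

section
/- If (A, μ) is an associative algebra and α, β : A → A are two commuting algebra endomorphisms, then (A, μ∘(α⊗β), α, β) is a multiplicative BiHom-associative algebra; that is, setting x∗y = μ(α(x), β(y)), the maps α, β are multiplicative for ∗ and α(x)∗(y∗z) = (x∗y)∗β(z) holds for all x,y,z. -/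
theorem stmt1 {K : Type*} [Field K] {A : Type*} [AddCommGroup A] [Module K A]
    (mu : A → A → A) (al be : A → A)
    (hmu1 : ∀ x, IsLinearMap K (mu x)) (hmu2 : ∀ y, IsLinearMap K (fun x => mu x y))
    (hassoc : ∀ x y z, mu x (mu y z) = mu (mu x y) z)
    (hal : IsLinearMap K al) (hbe : IsLinearMap K be)
    (halmul : ∀ x y, al (mu x y) = mu (al x) (al y))
    (hbemul : ∀ x y, be (mu x y) = mu (be x) (be y))
    (hcomm : ∀ x, al (be x) = be (al x)) :
    IsBiHomAssociative K (fun x y => mu (al x) (be y)) al be := by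
  refine ⟨hal, hbe, ?_, ?_, hcomm, ?_, ?_, ?_⟩
  · intro x
    exact ⟨fun a b => by simp [(hbe).map_add, (hmu1 _).map_add],
           fun c a => by simp [(hbe).map_smul, (hmu1 _).map_smul]⟩
  · intro y
    exact ⟨fun a b => by simp [(hal).map_add, (hmu2 _).map_add],
           fun c a => by simp [(hal).map_smul, (hmu2 _).map_smul]⟩
  · intro x y; simp [halmul, hcomm]
  · intro x y; simp [hbemul, hcomm]
  · intro x y z
    simp only [halmul, hbemul, hcomm, hassoc]
end

section
/- Let (A, μ, α, β) be a BiHom-associative algebra, R : A → A a Rota-Baxter operator of weight λ commuting with α and β, and let α', β' : A → A be endomorphisms of A such that any two of α, β, α', β' commute and such that R commutes with α' and β'. Then for any nonnegative integer p, R is a Rota-Baxter operator of weight λ on the BiHom-associative algebra (A, μ∘(α'^p ⊗ β'^p), α'^p∘α, β'^p∘β). -/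
def IsRotaBaxter (K : Type*) [Field K] {A : Type*} [AddCommGroup A] [Module K A]
    (mu : A → A → A) (al be : A → A) (lam : K) (R : A → A) : Prop :=
  IsLinearMap K R ∧ (∀ x, al (R x) = R (al x)) ∧ (∀ x, be (R x) = R (be x)) ∧
  ∀ x y, mu (R x) (R y) = R (mu (R x) y + mu x (R y) + lam • mu x y)

private lemma iter_lin {K : Type*} [Field K] {A : Type*} [AddCommGroup A] [Module K A]
    {f : A → A} (hf : IsLinearMap K f) (p : ℕ) : IsLinearMap K (f^[p]) := by
  induction p with
  | zero => exact ⟨fun _ _ => rfl, fun _ _ => rfl⟩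
  | succ n ih =>
    constructor
    · intro x y
      simp [Function.iterate_succ_apply', ih.map_add, hf.map_add]
    · intro c x
      simp [Function.iterate_succ_apply', ih.map_smul, hf.map_smul]

private lemma iter_comm {A : Type*} {f g : A → A} (h : ∀ x, f (g x) = g (f x)) (p : ℕ) :
    ∀ x, f^[p] (g x) = g (f^[p] x) := by
  induction p with
  | zero => intro x; rfl
  | succ n ih =>
    intro x
    simp only [Function.iterate_succ_apply', ih x, h]

private lemma iter_mul {A : Type*} {mu : A → A → A} {f : A → A}
    (h : ∀ x y, f (mu x y) = mu (f x) (f y)) (p : ℕ) :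
    ∀ x y, f^[p] (mu x y) = mu (f^[p] x) (f^[p] y) := by
  induction p with
  | zero => intro x y; rfl
  | succ n ih =>
    intro x y
    simp only [Function.iterate_succ_apply', ih, h]

theorem stmt2 {K : Type*} [Field K] {A : Type*} [AddCommGroup A] [Module K A]
    (mu : A → A → A) (al be al' be' R : A → A) (lam : K) (p : ℕ)
    (h : IsBiHomAssociative K mu al be)
    (hR : IsRotaBaxter K mu al be lam R)
    (hal' : IsLinearMap K al') (hbe' : IsLinearMap K be')
    (hal'mul : ∀ x y, al' (mu x y) = mu (al' x) (al' y))
    (hbe'mul : ∀ x y, be' (mu x y) = mu (be' x) (be' y))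
    (c1 : ∀ x, al' (al x) = al (al' x)) (c2 : ∀ x, al' (be x) = be (al' x))
    (c3 : ∀ x, be' (al x) = al (be' x)) (c4 : ∀ x, be' (be x) = be (be' x))
    (c5 : ∀ x, al' (be' x) = be' (al' x))
    (hRal' : ∀ x, R (al' x) = al' (R x)) (hRbe' : ∀ x, R (be' x) = be' (R x)) :
    IsBiHomAssociative K (fun x y => mu (al'^[p] x) (be'^[p] y)) (al'^[p] ∘ al) (be'^[p] ∘ be) ∧
    IsRotaBaxter K (fun x y => mu (al'^[p] x) (be'^[p] y)) (al'^[p] ∘ al) (be'^[p] ∘ be) lam R := by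
  obtain ⟨hal, hbe, hmuL, hmuR, hab, halmul, hbemul, hassoc⟩ := h
  obtain ⟨hRlin, hRal, hRbe, hRB⟩ := hR
  have hA := iter_lin hal' p
  have hB := iter_lin hbe' p
  have hAmul := iter_mul hal'mul p
  have hBmul := iter_mul hbe'mul p
  have hc1 := iter_comm c1 p -- al'^[p] (al x) = al (al'^[p] x)
  have hc2 := iter_comm c2 p -- al'^[p] (be x) = be (al'^[p] x)
  have hc3 := iter_comm c3 p -- be'^[p] (al x) = al (be'^[p] x)
  have hc4 := iter_comm c4 p -- be'^[p] (be x) = be (be'^[p] x)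
  have hc5 := iter_comm c5 p -- al'^[p] (be' x) = be' (al'^[p] x)
  -- al'^[p] and be'^[p] commute
  have hc55 : ∀ x, al'^[p] (be'^[p] x) = be'^[p] (al'^[p] x) := fun x =>
    (iter_comm (fun y => (hc5 y).symm) p x).symm
  have hRA : ∀ x, R (al'^[p] x) = al'^[p] (R x) := fun x =>
    (iter_comm (fun y => (hRal' y).symm) p x).symm
  have hRBe : ∀ x, R (be'^[p] x) = be'^[p] (R x) := fun x =>
    (iter_comm (fun y => (hRbe' y).symm) p x).symm
  constructor
  · refine ⟨?_, ?_, ?_, ?_, ?_, ?_, ?_, ?_⟩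
    · exact ⟨fun x y => by simp [hal.map_add, hA.map_add],
        fun c x => by simp [hal.map_smul, hA.map_smul]⟩
    · exact ⟨fun x y => by simp [hbe.map_add, hB.map_add],
        fun c x => by simp [hbe.map_smul, hB.map_smul]⟩
    · intro x
      exact ⟨fun y z => by simp [hB.map_add, (hmuL _).map_add],
        fun c y => by simp [hB.map_smul, (hmuL _).map_smul]⟩
    · intro y
      exact ⟨fun x z => by simp [hA.map_add, (hmuR _).map_add],
        fun c x => by simp [hA.map_smul, (hmuR _).map_smul]⟩
    · intro x
      simp only [Function.comp_apply, hc1, hc2, hc3, hc4, hc55, hab]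
    · intro x y
      simp only [Function.comp_apply, halmul, hAmul, hc1, hc2, hc3, hc4, hc55, hab]
    · intro x y
      simp only [Function.comp_apply, hbemul, hBmul, hc1, hc2, hc3, hc4, hc55, hab]
    · intro x y z
      simp only [Function.comp_apply, hAmul, hBmul, hc1, hc2, hc3, hc4, hc55, hab]
      rw [hassoc]
  · refine ⟨hRlin, ?_, ?_, ?_⟩
    · intro x
      simp only [Function.comp_apply]
      rw [hRal, hRA]
    · intro x
      simp only [Function.comp_apply]
      rw [hRbe, hRBe]
    · intro x y
      simp only []
      rw [← hRA, ← hRBe, hRB, hRA, hRBe]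
end

section
/- If (A₁, μ₁, α₁, β₁) and (A₂, μ₂, α₂, β₂) are BiHom-associative algebras, then the tensor product A₁ ⊗ A₂ with the product (a₁⊗a₂)∗(b₁⊗b₂) = μ₁(a₁,b₁) ⊗ μ₂(a₂,b₂) and twisting maps α₁⊗α₂ and β₁⊗β₂ is a BiHom-associative algebra. -/
open TensorProduct in
theorem stmt4 {K : Type*} [Field K] {A1 A2 : Type*} [AddCommGroup A1] [Module K A1]
    [AddCommGroup A2] [Module K A2]
    (mu1 : A1 → A1 → A1) (mu2 : A2 → A2 → A2)
    (al1 be1 : A1 →ₗ[K] A1) (al2 be2 : A2 →ₗ[K] A2)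
    (h1 : IsBiHomAssociative K mu1 ⇑al1 ⇑be1)
    (h2 : IsBiHomAssociative K mu2 ⇑al2 ⇑be2)
    (m : TensorProduct K A1 A2 → TensorProduct K A1 A2 → TensorProduct K A1 A2)
    (hm1 : ∀ x, IsLinearMap K (m x)) (hm2 : ∀ y, IsLinearMap K (fun x => m x y))
    (hpure : ∀ (a1 b1 : A1) (a2 b2 : A2),
      m (a1 ⊗ₜ[K] a2) (b1 ⊗ₜ[K] b2) = mu1 a1 b1 ⊗ₜ[K] mu2 a2 b2) :
    IsBiHomAssociative K m ⇑(TensorProduct.map al1 al2) ⇑(TensorProduct.map be1 be2) := by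
  obtain ⟨-, -, -, -, hc1, ha1, hb1, has1⟩ := h1
  obtain ⟨-, -, -, -, hc2, ha2, hb2, has2⟩ := h2
  have mar : ∀ x a b, m x (a + b) = m x a + m x b := fun x a b => (hm1 x).map_add a b
  have mal : ∀ x a b, m (a + b) x = m a x + m b x := fun x a b => (hm2 x).map_add a b
  have mzr : ∀ x, m x 0 = 0 := fun x => (hm1 x).map_zero
  have mzl : ∀ x, m 0 x = 0 := fun x => (hm2 x).map_zero
  refine ⟨(TensorProduct.map al1 al2).isLinear, (TensorProduct.map be1 be2).isLinear,
    hm1, hm2, ?_, ?_, ?_, ?_⟩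
  · intro x
    induction x using TensorProduct.induction_on with
    | zero => simp
    | tmul a b => simp [hc1 a, hc2 b]
    | add x y hx hy => simp [hx, hy]
  · intro x y
    induction x using TensorProduct.induction_on with
    | zero => simp [mzl]
    | add x x' hx hx' => simp [mal, hx, hx']
    | tmul a b =>
      induction y using TensorProduct.induction_on with
      | zero => simp [mzr]
      | add y y' hy hy' => simp [mar, hy, hy']
      | tmul c d => simp [hpure, ha1, ha2]
  · intro x y
    induction x using TensorProduct.induction_on with
    | zero => simp [mzl]
    | add x x' hx hx' => simp [mal, hx, hx']
    | tmul a b =>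
      induction y using TensorProduct.induction_on with
      | zero => simp [mzr]
      | add y y' hy hy' => simp [mar, hy, hy']
      | tmul c d => simp [hpure, hb1, hb2]
  · intro x y z
    induction x using TensorProduct.induction_on with
    | zero => simp [mzl]
    | add x x' hx hx' => simp [mal, hx, hx']
    | tmul a b =>
      induction y using TensorProduct.induction_on with
      | zero => simp [mzr, mzl]
      | add y y' hy hy' =>
        simp only [map_tmul] at hy hy'
        simp [mar, mal, hy, hy']
      | tmul c d =>
        induction z using TensorProduct.induction_on with
        | zero => simp [mzr]
        | add z z' hz hz' =>
          simp only [map_tmul] at hz hz'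
          simp [mar, hz, hz']
        | tmul e f => simp [hpure, has1, has2]
end

section
/- Let (l, r, β₁, β₂, V) be a bimodule of a BiHom-associative algebra (A, ·, α₁, α₂). Then the direct sum A ⊕ V with the product (x₁+v₁)∗(x₂+v₂) = x₁·x₂ + l(x₁)v₂ + r(x₂)v₁ and twisting maps α₁⊕β₁, α₂⊕β₂ is a BiHom-associative algebra. -/
def IsBiHomBimodule (K : Type*) [Field K] {A V : Type*} [AddCommGroup A] [Module K A]
    [AddCommGroup V] [Module K V]
    (mu : A → A → A) (al1 al2 : A → A) (l r : A → V → V) (be1 be2 : V → V) : Prop :=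
  IsLinearMap K be1 ∧ IsLinearMap K be2 ∧ (∀ v, be1 (be2 v) = be2 (be1 v)) ∧
  (∀ x, IsLinearMap K (l x)) ∧ (∀ v, IsLinearMap K (fun x => l x v)) ∧
  (∀ x, IsLinearMap K (r x)) ∧ (∀ v, IsLinearMap K (fun x => r x v)) ∧
  (∀ x y v, l (mu x y) (be2 v) = l (al1 x) (l y v)) ∧
  (∀ x y v, r (mu x y) (be1 v) = r (al2 y) (r x v)) ∧
  (∀ x y v, l (al1 x) (r y v) = r (al2 y) (l x v)) ∧
  (∀ x v, be1 (l x v) = l (al1 x) (be1 v)) ∧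
  (∀ x v, be1 (r x v) = r (al1 x) (be1 v)) ∧
  (∀ x v, be2 (l x v) = l (al2 x) (be2 v)) ∧
  (∀ x v, be2 (r x v) = r (al2 x) (be2 v))

theorem stmt7 {K : Type*} [Field K] {A V : Type*} [AddCommGroup A] [Module K A]
    [AddCommGroup V] [Module K V]
    (mu : A → A → A) (al1 al2 : A → A) (l r : A → V → V) (be1 be2 : V → V)
    (h : IsBiHomAssociative K mu al1 al2)
    (hb : IsBiHomBimodule K mu al1 al2 l r be1 be2) :
    IsBiHomAssociative K (fun p q : A × V => (mu p.1 q.1, l p.1 q.2 + r q.1 p.2))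
      (fun p => (al1 p.1, be1 p.2)) (fun p => (al2 p.1, be2 p.2)) := by
  obtain ⟨hal, hbe, hl1, hr1, hcomm, hmal, hmbe, hassoc⟩ := h
  obtain ⟨hb1, hb2, hbc, hlx, hlv, hrx, hrv, hL, hR, hLR, hb1l, hb1r, hb2l, hb2r⟩ := hb
  have hladd : ∀ (a b : A) (v : V), l (a + b) v = l a v + l b v :=
    fun a b v => (hlv v).map_add a b
  have hlsmul : ∀ (c : K) (a : A) (v : V), l (c • a) v = c • l a v :=
    fun c a v => (hlv v).map_smul c a
  have hradd : ∀ (a b : A) (v : V), r (a + b) v = r a v + r b v :=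
    fun a b v => (hrv v).map_add a b
  have hrsmul : ∀ (c : K) (a : A) (v : V), r (c • a) v = c • r a v :=
    fun c a v => (hrv v).map_smul c a
  have hmadd : ∀ (a b y : A), mu (a + b) y = mu a y + mu b y :=
    fun a b y => (hr1 y).map_add a b
  have hmsmul : ∀ (c : K) (a y : A), mu (c • a) y = c • mu a y :=
    fun c a y => (hr1 y).map_smul c a
  refine ⟨⟨?_, ?_⟩, ⟨?_, ?_⟩, ?_, ?_, ?_, ?_, ?_, ?_⟩
  · intro p q; simp [hal.map_add, hb1.map_add]
  · intro c p; simp [hal.map_smul, hb1.map_smul]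
  · intro p q; simp [hbe.map_add, hb2.map_add]
  · intro c p; simp [hbe.map_smul, hb2.map_smul]
  · intro x; constructor
    · intro p q
      refine Prod.ext ?_ ?_ <;> simp only [Prod.fst_add, Prod.snd_add]
      · exact (hl1 x.1).map_add _ _
      simp only [(hlx x.1).map_add, hradd]
      abel
    · intro c p
      refine Prod.ext ?_ ?_ <;> simp only [Prod.smul_fst, Prod.smul_snd]
      · exact (hl1 x.1).map_smul _ _
      simp only [(hlx x.1).map_smul, hrsmul, smul_add]
  · intro y; constructor
    · intro p q
      refine Prod.ext ?_ ?_ <;> simp only [Prod.fst_add, Prod.snd_add]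
      · exact hmadd _ _ _
      simp only [hladd, (hrx y.1).map_add]
      abel
    · intro c p
      refine Prod.ext ?_ ?_ <;> simp only [Prod.smul_fst, Prod.smul_snd]
      · exact hmsmul _ _ _
      simp only [hlsmul, (hrx y.1).map_smul, smul_add]
  · intro p; simp [hcomm, hbc]
  · intro p q; simp [hmal, hb1.map_add, hb1l, hb1r]
  · intro p q; simp [hmbe, hb2.map_add, hb2l, hb2r]
  · intro p q z
    refine Prod.ext (hassoc _ _ _) ?_
    simp only [(hlx _).map_add, (hrx _).map_add, hL, hR, hLR]
    abel
end

section
/- Every BiHom-associative dialgebra (D, ⊣, ⊢, α, β) is a BiHom-left-symmetric dialgebra; that is, the five dialgebra axioms imply: α(x)⊣(y⊣z) = α(x)⊣(y⊢z); (x⊢y)⊢β(z) = (x⊣y)⊢β(z); αβ(x)⊣(α(y)⊣z) − (β(x)⊣α(y))⊣β(z) = αβ(y)⊢(α(x)⊣z) − (β(y)⊢α(x))⊣β(z); and αβ(x)⊢(α(y)⊢z) − (β(x)⊢α(y))⊢β(z) = αβ(y)⊢(α(x)⊢z) − (β(y)⊢α(x))⊢β(z). -/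
def IsBiHomAssociativeDialgebra (K : Type*) [Field K] {A : Type*} [AddCommGroup A] [Module K A]
    (dl dr : A → A → A) (al be : A → A) : Prop :=
  IsLinearMap K al ∧ IsLinearMap K be ∧
  (∀ x, IsLinearMap K (dl x)) ∧ (∀ y, IsLinearMap K (fun x => dl x y)) ∧
  (∀ x, IsLinearMap K (dr x)) ∧ (∀ y, IsLinearMap K (fun x => dr x y)) ∧
  (∀ x, al (be x) = be (al x)) ∧
  (∀ x y, al (dl x y) = dl (al x) (al y)) ∧
  (∀ x y, al (dr x y) = dr (al x) (al y)) ∧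
  (∀ x y, be (dl x y) = dl (be x) (be y)) ∧
  (∀ x y, be (dr x y) = dr (be x) (be y)) ∧
  (∀ x y z, dl (dr x y) (be z) = dr (al x) (dl y z)) ∧
  (∀ x y z, dl (al x) (dl y z) = dl (dl x y) (be z)) ∧
  (∀ x y z, dl (dl x y) (be z) = dl (al x) (dr y z)) ∧
  (∀ x y z, dr (dr x y) (be z) = dr (al x) (dr y z)) ∧
  (∀ x y z, dr (al x) (dr y z) = dr (dl x y) (be z))

def IsBiHomLeftSymmetricDialgebra (K : Type*) [Field K] {A : Type*} [AddCommGroup A] [Module K A]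
    (dl dr : A → A → A) (al be : A → A) : Prop :=
  IsLinearMap K al ∧ IsLinearMap K be ∧
  (∀ x, IsLinearMap K (dl x)) ∧ (∀ y, IsLinearMap K (fun x => dl x y)) ∧
  (∀ x, IsLinearMap K (dr x)) ∧ (∀ y, IsLinearMap K (fun x => dr x y)) ∧
  (∀ x, al (be x) = be (al x)) ∧
  (∀ x y, al (dl x y) = dl (al x) (al y)) ∧
  (∀ x y, al (dr x y) = dr (al x) (al y)) ∧
  (∀ x y, be (dl x y) = dl (be x) (be y)) ∧
  (∀ x y, be (dr x y) = dr (be x) (be y)) ∧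
  (∀ x y z, dl (al x) (dl y z) = dl (al x) (dr y z)) ∧
  (∀ x y z, dr (dr x y) (be z) = dr (dl x y) (be z)) ∧
  (∀ x y z, dl (al (be x)) (dl (al y) z) - dl (dl (be x) (al y)) (be z)
      = dr (al (be y)) (dl (al x) z) - dl (dr (be y) (al x)) (be z)) ∧
  (∀ x y z, dr (al (be x)) (dr (al y) z) - dr (dr (be x) (al y)) (be z)
      = dr (al (be y)) (dr (al x) z) - dr (dr (be y) (al x)) (be z))

theorem stmt9 {K : Type*} [Field K] {A : Type*} [AddCommGroup A] [Module K A]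
    (dl dr : A → A → A) (al be : A → A)
    (h : IsBiHomAssociativeDialgebra K dl dr al be) :
    IsBiHomLeftSymmetricDialgebra K dl dr al be := by
  obtain ⟨h1, h2, h3, h4, h5, h6, h7, h8, h9, h10, h11, A1, A2, A3, A4, A5⟩ := h
  refine ⟨h1, h2, h3, h4, h5, h6, h7, h8, h9, h10, h11, ?_, ?_, ?_, ?_⟩
  · intro x y z; rw [A2, A3]
  · intro x y z; rw [A4, A5]
  · intro x y z
    rw [A2 (be x) (al y) z, A1 (be y) (al x) z, sub_self, sub_self]
  · intro x y z
    rw [← A4 (be x) (al y) z, ← A4 (be y) (al x) z, sub_self, sub_self]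
end

section
/- Let (S, ⊣, ⊢, α, β) be a BiHom-left-symmetric dialgebra and α', β' : S → S endomorphisms of S (for both products) such that any two of the maps α, β, α', β' commute. Then S with the twisted products x ⊣' y := α'(x) ⊣ β'(y) and x ⊢' y := α'(x) ⊢ β'(y), and twisting maps α'∘α and β'∘β, is again a BiHom-left-symmetric dialgebra. -/
theorem stmt11 {K : Type*} [Field K] {A : Type*} [AddCommGroup A] [Module K A]
    (dl dr : A → A → A) (al be al' be' : A → A)
    (h : IsBiHomLeftSymmetricDialgebra K dl dr al be)
    (hal' : IsLinearMap K al') (hbe' : IsLinearMap K be')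
    (hal'dl : ∀ x y, al' (dl x y) = dl (al' x) (al' y))
    (hal'dr : ∀ x y, al' (dr x y) = dr (al' x) (al' y))
    (hbe'dl : ∀ x y, be' (dl x y) = dl (be' x) (be' y))
    (hbe'dr : ∀ x y, be' (dr x y) = dr (be' x) (be' y))
    (c1 : ∀ x, al' (al x) = al (al' x)) (c2 : ∀ x, al' (be x) = be (al' x))
    (c3 : ∀ x, be' (al x) = al (be' x)) (c4 : ∀ x, be' (be x) = be (be' x))
    (c5 : ∀ x, al' (be' x) = be' (al' x)) :
    IsBiHomLeftSymmetricDialgebra K (fun x y => dl (al' x) (be' y))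
      (fun x y => dr (al' x) (be' y)) (al' ∘ al) (be' ∘ be) := by
  obtain ⟨hal, hbe, hdl1, hdl2, hdr1, hdr2, hab, haldl, haldr, hbedl, hbedr, ax1, ax2, ax3, ax4⟩ := h
  refine ⟨?_, ?_, ?_, ?_, ?_, ?_, ?_, ?_, ?_, ?_, ?_, ?_, ?_, ?_, ?_⟩
  · exact ⟨fun a b => by simp [hal.map_add, hal'.map_add],
      fun c a => by simp [hal.map_smul, hal'.map_smul]⟩
  · exact ⟨fun a b => by simp [hbe.map_add, hbe'.map_add],
      fun c a => by simp [hbe.map_smul, hbe'.map_smul]⟩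
  · exact fun x => ⟨fun a b => by simp only []; rw [hbe'.map_add, (hdl1 _).map_add],
      fun c a => by simp only []; rw [hbe'.map_smul, (hdl1 _).map_smul]⟩
  · exact fun y => ⟨fun a b => by simp only [hal'.map_add, (hdl2 _).map_add],
      fun c a => by simp only [hal'.map_smul, (hdl2 _).map_smul]⟩
  · exact fun x => ⟨fun a b => by simp only []; rw [hbe'.map_add, (hdr1 _).map_add],
      fun c a => by simp only []; rw [hbe'.map_smul, (hdr1 _).map_smul]⟩
  · exact fun y => ⟨fun a b => by simp only [hal'.map_add, (hdr2 _).map_add],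
      fun c a => by simp only [hal'.map_smul, (hdr2 _).map_smul]⟩
  · intro x; simp only [Function.comp_apply, c1, c2, c3, c4, c5, hab]
  · intro x y; simp only [Function.comp_apply, hal'dl, haldl, c1, c2, c3, c5]
  · intro x y; simp only [Function.comp_apply, hal'dr, haldr, c1, c2, c3, c5]
  · intro x y; simp only [Function.comp_apply, hbe'dl, hbedl, c2, c3, c4, c5]
  · intro x y; simp only [Function.comp_apply, hbe'dr, hbedr, c2, c3, c4, c5]
  · intro x y z
    simp only [Function.comp_apply, hbe'dl, hbe'dr, c1, c2, c3, c4, c5]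
    exact ax1 _ _ _
  · intro x y z
    simp only [Function.comp_apply, hal'dl, hal'dr, c1, c2, c3, c4, c5]
    exact ax2 _ _ _
  · intro x y z
    have := ax3 (al' (al' (be' x))) (al' (al' (be' y))) (be' (be' z))
    simp only [Function.comp_apply, hal'dl, hal'dr, hbe'dl, hbe'dr, haldl, haldr,
      hbedl, hbedr, hab, c1, c2, c3, c4, c5] at this ⊢
    exact this
  · intro x y z
    have := ax4 (al' (al' (be' x))) (al' (al' (be' y))) (be' (be' z))
    simp only [Function.comp_apply, hal'dl, hal'dr, hbe'dl, hbe'dr, haldl, haldr,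
      hbedl, hbedr, hab, c1, c2, c3, c4, c5] at this ⊢
    exact this
end

section
/- If (A, ⊣, ⊢, α, β) is a BiHom-dendriform algebra, then (A, ∗, α, β) with x ∗ y := x ⊣ y + x ⊢ y is a multiplicative BiHom-associative algebra. -/
def IsBiHomDendriform (K : Type*) [Field K] {A : Type*} [AddCommGroup A] [Module K A]
    (dl dr : A → A → A) (al be : A → A) : Prop :=
  IsLinearMap K al ∧ IsLinearMap K be ∧
  (∀ x, IsLinearMap K (dl x)) ∧ (∀ y, IsLinearMap K (fun x => dl x y)) ∧
  (∀ x, IsLinearMap K (dr x)) ∧ (∀ y, IsLinearMap K (fun x => dr x y)) ∧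
  (∀ x, al (be x) = be (al x)) ∧
  (∀ x y, al (dl x y) = dl (al x) (al y)) ∧
  (∀ x y, al (dr x y) = dr (al x) (al y)) ∧
  (∀ x y, be (dl x y) = dl (be x) (be y)) ∧
  (∀ x y, be (dr x y) = dr (be x) (be y)) ∧
  (∀ x y z, dl (dl x y) (be z) = dl (al x) (dl y z + dr y z)) ∧
  (∀ x y z, dl (dr x y) (be z) = dr (al x) (dl y z)) ∧
  (∀ x y z, dr (al x) (dr y z) = dr (dl x y + dr x y) (be z))

theorem stmt14 {K : Type*} [Field K] {A : Type*} [AddCommGroup A] [Module K A]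
    (dl dr : A → A → A) (al be : A → A)
    (h : IsBiHomDendriform K dl dr al be) :
    IsBiHomAssociative K (fun x y => dl x y + dr x y) al be := by
  obtain ⟨hal, hbe, hdlr, hdll, hdrr, hdrl, hcom, hadl, hadr, hbdl, hbdr, h1, h2, h3⟩ := h
  refine ⟨hal, hbe, ?_, ?_, hcom, ?_, ?_, ?_⟩
  · intro x
    exact ⟨fun a b => by simp [(hdlr x).map_add, (hdrr x).map_add]; abel,
           fun c a => by simp [(hdlr x).map_smul, (hdrr x).map_smul]⟩
  · intro y
    exact ⟨fun a b => by simp [(hdll y).map_add, (hdrl y).map_add]; abel,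
           fun c a => by simp [(hdll y).map_smul, (hdrl y).map_smul]⟩
  · intro x y; simp [hal.map_add, hadl, hadr]
  · intro x y; simp [hbe.map_add, hbdl, hbdr]
  · intro x y z
    simp only [(hdlr (al x)).map_add, (hdll (be z)).map_add, (hdrr (al x)).map_add,
      (hdrl (be z)).map_add]
    have e1 := h1 x y z
    have e2 := h2 x y z
    have e3 := h3 x y z
    rw [e1, e2]
    rw [(hdrl (be z)).map_add] at e3
    rw [e3, (hdlr (al x)).map_add]
    abel
end

section
/- If (T, ⊣, ⊢, ·, α, β) is a BiHom-tridendriform algebra, then (T, ⊣, ⊢', α, β) with x ⊢' y := x ⊢ y + x · y is a BiHom-dendriform algebra. -/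
def IsBiHomTridendriform (K : Type*) [Field K] {A : Type*} [AddCommGroup A] [Module K A]
    (dl dr m : A → A → A) (al be : A → A) : Prop :=
  IsLinearMap K al ∧ IsLinearMap K be ∧
  (∀ x, IsLinearMap K (dl x)) ∧ (∀ y, IsLinearMap K (fun x => dl x y)) ∧
  (∀ x, IsLinearMap K (dr x)) ∧ (∀ y, IsLinearMap K (fun x => dr x y)) ∧
  (∀ x, IsLinearMap K (m x)) ∧ (∀ y, IsLinearMap K (fun x => m x y)) ∧
  (∀ x, al (be x) = be (al x)) ∧
  (∀ x y, al (dl x y) = dl (al x) (al y)) ∧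
  (∀ x y, al (dr x y) = dr (al x) (al y)) ∧
  (∀ x y, al (m x y) = m (al x) (al y)) ∧
  (∀ x y, be (dl x y) = dl (be x) (be y)) ∧
  (∀ x y, be (dr x y) = dr (be x) (be y)) ∧
  (∀ x y, be (m x y) = m (be x) (be y)) ∧
  (∀ x y z, dl (dl x y) (be z) = dl (al x) (dl y z + dr y z + m y z)) ∧
  (∀ x y z, dl (dr x y) (be z) = dr (al x) (dl y z)) ∧
  (∀ x y z, dr (al x) (dr y z) = dr (dl x y + dr x y + m x y) (be z)) ∧
  (∀ x y z, m (dl x y) (be z) = m (al x) (dr y z)) ∧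
  (∀ x y z, m (dr x y) (be z) = dr (al x) (m y z)) ∧
  (∀ x y z, dl (m x y) (be z) = m (al x) (dl y z)) ∧
  (∀ x y z, m (m x y) (be z) = m (al x) (m y z))

theorem stmt15 {K : Type*} [Field K] {A : Type*} [AddCommGroup A] [Module K A]
    (dl dr m : A → A → A) (al be : A → A)
    (h : IsBiHomTridendriform K dl dr m al be) :
    IsBiHomDendriform K dl (fun x y => dr x y + m x y) al be := by
  obtain ⟨hal, hbe, hdl1, hdl2, hdr1, hdr2, hm1, hm2, hab, hadl, hadr, ham,
    hbdl, hbdr, hbm, t1, t2, t3, t4, t5, t6, t7⟩ := h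
  refine ⟨hal, hbe, hdl1, hdl2, ?_, ?_, hab, hadl, ?_, hbdl, ?_, ?_, ?_, ?_⟩
  · intro x
    exact ⟨fun a b => by simp [(hdr1 x).map_add, (hm1 x).map_add]; abel,
      fun c a => by simp [(hdr1 x).map_smul, (hm1 x).map_smul, smul_add]⟩
  · intro y
    exact ⟨fun a b => by simp [(hdr2 y).map_add, (hm2 y).map_add]; abel,
      fun c a => by simp [(hdr2 y).map_smul, (hm2 y).map_smul, smul_add]⟩
  · intro x y
    simp [hal.map_add, hadr, ham]
  · intro x y
    simp [hbe.map_add, hbdr, hbm]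
  · intro x y z
    rw [t1]; ring_nf; rw [add_assoc]
  · intro x y z
    have := (hdl2 (be z)).map_add (dr x y) (m x y)
    rw [this, t2, t6]
  · intro x y z
    have h1 := (hdr1 (al x)).map_add (dr y z) (m y z)
    have h2 := (hm1 (al x)).map_add (dr y z) (m y z)
    have h4 := (hm2 (be z)).map_add (dl x y + dr x y) (m x y)
    have h5 := (hm2 (be z)).map_add (dl x y) (dr x y)
    simp only at h1 h2 h4 h5 ⊢
    rw [h1, h2, t3,
      show dl x y + (dr x y + m x y) = dl x y + dr x y + m x y from (add_assoc _ _ _).symm,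
      h4, h5, t4, t5, t7]
    abel
end

section
/- If (T, ⊣, ⊢, ·, α, β) is a BiHom-tridendriform algebra, then (T, ∗, α, β) with x ∗ y := x ⊣ y + x ⊢ y + x · y is a BiHom-associative algebra. -/
theorem stmt16 {K : Type*} [Field K] {A : Type*} [AddCommGroup A] [Module K A]
    (dl dr m : A → A → A) (al be : A → A)
    (h : IsBiHomTridendriform K dl dr m al be) :
    IsBiHomAssociative K (fun x y => dl x y + dr x y + m x y) al be := by
  obtain ⟨hal, hbe, hdl1, hdl2, hdr1, hdr2, hm1, hm2, hc, hadl, hadr, ham, hbdl, hbdr, hbm, t1, t2, t3, t4, t5, t6, t7⟩ := h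
  refine ⟨hal, hbe, ?_, ?_, hc, ?_, ?_, ?_⟩
  · intro x
    exact ⟨fun a b => by simp only [(hdl1 x).map_add, (hdr1 x).map_add, (hm1 x).map_add]; abel,
           fun c a => by simp only [(hdl1 x).map_smul, (hdr1 x).map_smul, (hm1 x).map_smul, smul_add]⟩
  · intro y
    exact ⟨fun a b => by simp only [(hdl2 y).map_add, (hdr2 y).map_add, (hm2 y).map_add]; abel,
           fun c a => by simp only [(hdl2 y).map_smul, (hdr2 y).map_smul, (hm2 y).map_smul, smul_add]⟩
  · intro x y; simp only [hadl, hadr, ham, (hal).map_add]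
  · intro x y; simp only [hbdl, hbdr, hbm, (hbe).map_add]
  · intro x y z
    simp only
    rw [(hdr1 _).map_add, (hdr1 _).map_add, t3,
        (hdl2 _).map_add, (hdl2 _).map_add, (hm2 _).map_add, (hm2 _).map_add,
        (hdl1 _).map_add, (hdl1 _).map_add, (hm1 _).map_add, (hm1 _).map_add,
        t1, t2, t4, t5, t6, t7,
        (hdl1 _).map_add, (hdl1 _).map_add]
    abel
end

section
/- Let (A, ·, α, β) be a BiHom-associative algebra and R : A → A a Rota-Baxter operator of weight λ (commuting with α and β). Define x ⊣ y := x·R(y), x ⊢ y := R(x)·y, and x ∗ y := λ x·y. Then (A, ⊣, ⊢, ∗, α, β) is a BiHom-tridendriform algebra. -/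
theorem stmt17 {K : Type*} [Field K] {A : Type*} [AddCommGroup A] [Module K A]
    (mu : A → A → A) (al be R : A → A) (lam : K)
    (h : IsBiHomAssociative K mu al be)
    (hR : IsRotaBaxter K mu al be lam R) :
    IsBiHomTridendriform K (fun x y => mu x (R y)) (fun x y => mu (R x) y)
      (fun x y => lam • mu x y) al be := by
  obtain ⟨hal, hbe, hmul, hmur, hab, halm, hbem, hassoc⟩ := h
  obtain ⟨hRl, hRa, hRb, hRB⟩ := hR
  have msr : ∀ x (c : K) a, mu x (c • a) = c • mu x a := fun x c a => (hmul x).map_smul c a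
  have msl : ∀ y (c : K) a, mu (c • a) y = c • mu a y := fun y c a => (hmur y).map_smul c a
  have mar : ∀ x a b, mu x (a + b) = mu x a + mu x b := fun x a b => (hmul x).map_add a b
  have mal : ∀ y a b, mu (a + b) y = mu a y + mu b y := fun y a b => (hmur y).map_add a b
  refine ⟨hal, hbe, ?_, ?_, ?_, ?_, ?_, ?_, hab, ?_, ?_, ?_, ?_, ?_, ?_, ?_, ?_, ?_, ?_, ?_, ?_, ?_⟩
  · intro x
    exact ⟨fun a b => show mu x (R (a + b)) = _ by rw [hRl.map_add, mar],
           fun c a => show mu x (R (c • a)) = _ by rw [hRl.map_smul, msr]⟩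
  · intro y
    exact ⟨fun a b => mal (R y) a b, fun c a => msl (R y) c a⟩
  · intro x
    exact ⟨fun a b => mar (R x) a b, fun c a => msr (R x) c a⟩
  · intro y
    exact ⟨fun a b => show mu (R (a + b)) y = _ by rw [hRl.map_add, mal],
           fun c a => show mu (R (c • a)) y = _ by rw [hRl.map_smul, msl]⟩
  · intro x
    exact ⟨fun a b => show lam • mu x (a + b) = _ by rw [mar, smul_add],
           fun c a => show lam • mu x (c • a) = _ by rw [msr, smul_comm]⟩
  · intro y
    exact ⟨fun a b => show lam • mu (a + b) y = _ by rw [mal, smul_add],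
           fun c a => show lam • mu (c • a) y = _ by rw [msl, smul_comm]⟩
  · intro x y; show al (mu x (R y)) = _; rw [halm, hRa]
  · intro x y; show al (mu (R x) y) = _; rw [halm, hRa]
  · intro x y; show al (lam • mu x y) = _; rw [hal.map_smul, halm]
  · intro x y; show be (mu x (R y)) = _; rw [hbem, hRb]
  · intro x y; show be (mu (R x) y) = _; rw [hbem, hRb]
  · intro x y; show be (lam • mu x y) = _; rw [hbe.map_smul, hbem]
  · intro x y z
    show mu (mu x (R y)) (R (be z)) = mu (al x) (R (mu y (R z) + mu (R y) z + lam • mu y z))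
    rw [← hRb, ← hassoc, hRB]
    congr 1
    abel
  · intro x y z
    show mu (mu (R x) y) (R (be z)) = mu (R (al x)) (mu y (R z))
    rw [← hRb, ← hassoc, hRa]
  · intro x y z
    show mu (R (al x)) (mu (R y) z)
      = mu (R (mu x (R y) + mu (R x) y + lam • mu x y)) (be z)
    have h2 : R (mu x (R y) + mu (R x) y + lam • mu x y) = mu (R x) (R y) := by
      rw [hRB]; congr 1; abel
    rw [h2, ← hRa, hassoc]
  · intro x y z
    show lam • mu (mu x (R y)) (be z) = lam • mu (al x) (mu (R y) z)
    rw [hassoc]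
  · intro x y z
    show lam • mu (mu (R x) y) (be z) = mu (R (al x)) (lam • mu y z)
    rw [msr, ← hassoc, hRa]
  · intro x y z
    show mu (lam • mu x y) (R (be z)) = lam • mu (al x) (mu y (R z))
    rw [← hRb, msl, ← hassoc]
  · intro x y z
    show lam • mu (lam • mu x y) (be z) = lam • mu (al x) (lam • mu y z)
    rw [msl, msr, ← hassoc]
end

section
/- Let (l_⊣, r_⊣, l_⊢, r_⊢, l_·, r_·, β₁, β₂, V) be a bimodule of a BiHom-tridendriform algebra (T, ⊣, ⊢, ·, α₁, α₂), and let (T, ∗, α₁, α₂) be the associated BiHom-associative algebra with x∗y = x⊣y + x⊢y + x·y. Then (l_⊣ + l_⊢ + l_·, r_⊣ + r_⊢ + r_·, β₁, β₂, V) is a bimodule of the BiHom-associative algebra (T, ∗, α₁, α₂). -/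
def IsBiHomTridendriformBimodule (K : Type*) [Field K] {A V : Type*}
    [AddCommGroup A] [Module K A] [AddCommGroup V] [Module K V]
    (dl dr m : A → A → A) (al1 al2 : A → A)
    (ll rl lr rr lm rm : A → V → V) (be1 be2 : V → V) : Prop :=
  IsLinearMap K be1 ∧ IsLinearMap K be2 ∧ (∀ v, be1 (be2 v) = be2 (be1 v)) ∧
  (∀ x, IsLinearMap K (ll x)) ∧ (∀ v, IsLinearMap K (fun x => ll x v)) ∧
  (∀ x, IsLinearMap K (rl x)) ∧ (∀ v, IsLinearMap K (fun x => rl x v)) ∧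
  (∀ x, IsLinearMap K (lr x)) ∧ (∀ v, IsLinearMap K (fun x => lr x v)) ∧
  (∀ x, IsLinearMap K (rr x)) ∧ (∀ v, IsLinearMap K (fun x => rr x v)) ∧
  (∀ x, IsLinearMap K (lm x)) ∧ (∀ v, IsLinearMap K (fun x => lm x v)) ∧
  (∀ x, IsLinearMap K (rm x)) ∧ (∀ v, IsLinearMap K (fun x => rm x v)) ∧
  (∀ x y v, ll (dl x y) (be2 v) = ll (al1 x) (ll y v + lr y v + lm y v)) ∧
  (∀ x y v, rl (al2 x) (ll y v) = ll (al1 y) (rl x v + rr x v + rm x v)) ∧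
  (∀ x y v, rl (al2 y) (rl x v) = rl (dl x y + dr x y + m x y) (be1 v)) ∧
  (∀ x y v, ll (dr x y) (be2 v) = lr (al1 x) (ll y v)) ∧
  (∀ x y v, rl (al2 x) (lr y v) = lr (al1 y) (rl x v)) ∧
  (∀ x y v, rl (al2 x) (rr y v) = rr (dl y x) (be1 v)) ∧
  (∀ x y v, lr (dl x y + dr x y + m x y) (be2 v) = lr (al1 x) (lr y v)) ∧
  (∀ x y v, rr (al2 x) (ll y v + lr y v + lm y v) = lr (al1 y) (rr x v)) ∧
  (∀ x y v, rr (al2 x) (rl y v + rr y v + rm y v) = rr (dr y x) (be1 v)) ∧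
  (∀ x y v, lm (dl x y) (be2 v) = lm (al1 x) (lr y v)) ∧
  (∀ x y v, rm (al2 x) (ll y v) = lm (al1 y) (rr x v)) ∧
  (∀ x y v, rm (al2 x) (rl y v) = rm (dr y x) (be1 v)) ∧
  (∀ x y v, lm (dr x y) (be2 v) = lr (al1 x) (lm y v)) ∧
  (∀ x y v, rm (al2 x) (lr y v) = lr (al1 y) (rm x v)) ∧
  (∀ x y v, rm (al2 x) (rr y v) = rr (m y x) (be1 v)) ∧
  (∀ x y v, ll (m x y) (be2 v) = lm (al1 x) (ll y v)) ∧
  (∀ x y v, rl (al2 x) (lm y v) = lm (al1 y) (rl x v)) ∧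
  (∀ x y v, rl (al2 x) (rm y v) = rm (dl y x) (be1 v)) ∧
  (∀ x y v, lm (m x y) (be2 v) = lm (al1 x) (lm y v)) ∧
  (∀ x y v, rm (al2 x) (lm y v) = lm (al1 y) (rm x v)) ∧
  (∀ x y v, rm (al2 x) (rm y v) = rm (m y x) (be1 v)) ∧
  (∀ x v, be1 (ll x v) = ll (al1 x) (be1 v)) ∧
  (∀ x v, be1 (rl x v) = rl (al1 x) (be1 v)) ∧
  (∀ x v, be1 (lr x v) = lr (al1 x) (be1 v)) ∧
  (∀ x v, be1 (rr x v) = rr (al1 x) (be1 v)) ∧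
  (∀ x v, be1 (lm x v) = lm (al1 x) (be1 v)) ∧
  (∀ x v, be1 (rm x v) = rm (al1 x) (be1 v)) ∧
  (∀ x v, be2 (ll x v) = ll (al2 x) (be2 v)) ∧
  (∀ x v, be2 (rl x v) = rl (al2 x) (be2 v)) ∧
  (∀ x v, be2 (lr x v) = lr (al2 x) (be2 v)) ∧
  (∀ x v, be2 (rr x v) = rr (al2 x) (be2 v)) ∧
  (∀ x v, be2 (lm x v) = lm (al2 x) (be2 v)) ∧
  (∀ x v, be2 (rm x v) = rm (al2 x) (be2 v))

theorem stmt18 {K : Type*} [Field K] {A V : Type*} [AddCommGroup A] [Module K A]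
    [AddCommGroup V] [Module K V]
    (dl dr m : A → A → A) (al1 al2 : A → A)
    (ll rl lr rr lm rm : A → V → V) (be1 be2 : V → V)
    (h : IsBiHomTridendriform K dl dr m al1 al2)
    (hb : IsBiHomTridendriformBimodule K dl dr m al1 al2 ll rl lr rr lm rm be1 be2) :
    IsBiHomBimodule K (fun x y => dl x y + dr x y + m x y) al1 al2
      (fun x v => ll x v + lr x v + lm x v) (fun x v => rl x v + rr x v + rm x v)
      be1 be2 := by

  obtain ⟨hbe1, hbe2, hbc, hll, hll', hrl, hrl', hlr, hlr', hrr, hrr', hlm, hlm', hrm, hrm',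
    e1, e2, e3, e4, e5, e6, e7, e8, e9, e10, e11, e12, e13, e14, e15, e16, e17, e18, e19, e20, e21,
    c1, c2, c3, c4, c5, c6, d1, d2, d3, d4, d5, d6⟩ := hb
  refine ⟨hbe1, hbe2, hbc, ?_, ?_, ?_, ?_, ?_, ?_, ?_, ?_, ?_, ?_, ?_⟩
  · intro x
    exact ⟨fun a b => by simp only [(hll x).map_add, (hlr x).map_add, (hlm x).map_add]; abel,
           fun c a => by simp only [(hll x).map_smul, (hlr x).map_smul, (hlm x).map_smul,
             smul_add]⟩
  · intro v
    exact ⟨fun a b => by simp only [(hll' v).map_add, (hlr' v).map_add, (hlm' v).map_add]; abel,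
           fun c a => by simp only [(hll' v).map_smul, (hlr' v).map_smul, (hlm' v).map_smul,
             smul_add]⟩
  · intro x
    exact ⟨fun a b => by simp only [(hrl x).map_add, (hrr x).map_add, (hrm x).map_add]; abel,
           fun c a => by simp only [(hrl x).map_smul, (hrr x).map_smul, (hrm x).map_smul,
             smul_add]⟩
  · intro v
    exact ⟨fun a b => by simp only [(hrl' v).map_add, (hrr' v).map_add, (hrm' v).map_add]; abel,
           fun c a => by simp only [(hrl' v).map_smul, (hrr' v).map_smul, (hrm' v).map_smul,
             smul_add]⟩
  · intro x y v
    beta_reduce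
    have E1 : ll (dl x y + dr x y + m x y) (be2 v)
        = ll (dl x y) (be2 v) + ll (dr x y) (be2 v) + ll (m x y) (be2 v) := by
      rw [(hll' (be2 v)).map_add, (hll' (be2 v)).map_add]
    have E2 : lm (dl x y + dr x y + m x y) (be2 v)
        = lm (dl x y) (be2 v) + lm (dr x y) (be2 v) + lm (m x y) (be2 v) := by
      rw [(hlm' (be2 v)).map_add, (hlm' (be2 v)).map_add]
    rw [E1, E2, e1, e4, e16, e7, e10, e13, e19,
      (hll (al1 x)).map_add, (hll (al1 x)).map_add,
      (hlr (al1 x)).map_add, (hlr (al1 x)).map_add,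
      (hlm (al1 x)).map_add, (hlm (al1 x)).map_add]
    abel
  · intro x y v
    beta_reduce
    have E1 : rl (dl x y + dr x y + m x y) (be1 v)
        = rl (dl x y) (be1 v) + rl (dr x y) (be1 v) + rl (m x y) (be1 v) := by
      rw [(hrl' (be1 v)).map_add, (hrl' (be1 v)).map_add]
    have E2 : rr (dl x y + dr x y + m x y) (be1 v)
        = rr (dl x y) (be1 v) + rr (dr x y) (be1 v) + rr (m x y) (be1 v) := by
      rw [(hrr' (be1 v)).map_add, (hrr' (be1 v)).map_add]
    have E3 : rm (dl x y + dr x y + m x y) (be1 v)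
        = rm (dl x y) (be1 v) + rm (dr x y) (be1 v) + rm (m x y) (be1 v) := by
      rw [(hrm' (be1 v)).map_add, (hrm' (be1 v)).map_add]
    rw [E2, E3,
      (hrl (al2 y)).map_add, (hrl (al2 y)).map_add,
      (hrm (al2 y)).map_add, (hrm (al2 y)).map_add,
      e3, e6, e18, e9, e12, e15, e21]
    abel
  · intro x y v
    beta_reduce
    rw [(hlr (al1 x)).map_add, (hlr (al1 x)).map_add,
      (hlm (al1 x)).map_add, (hlm (al1 x)).map_add,
      (hrl (al2 y)).map_add, (hrl (al2 y)).map_add,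
      (hrm (al2 y)).map_add, (hrm (al2 y)).map_add,
      e2, e5, e8, e11, e14, e17, e20]
    abel
  · intro x v
    rw [hbe1.map_add, hbe1.map_add, c1, c3, c5]
  · intro x v
    rw [hbe1.map_add, hbe1.map_add, c2, c4, c6]
  · intro x v
    rw [hbe2.map_add, hbe2.map_add, d1, d3, d5]
  · intro x v
    rw [hbe2.map_add, hbe2.map_add, d2, d4, d6]
end
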